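/- Let P be a locally finite partially ordered set with a weak rank function r, let κ be a P-kernel in the incidence algebra of P over ℤ[t], and let f, g ∈ 𝓘_{1/2}(P) satisfy \bar f = κ * f and \bar g = g * κ. Then the Z-function Z := g * κ * f satisfies deg(Z x y) ≤ r x y for all x ≤ y and \bar Z = Z; that is, for all x ≤ y, Polynomial.reflect (r x y) (Z x y) = Z x y, so each Z-polynomial Z x y is palindromic with respect to degree r x y. -/

import Mathlib

open Finset Polynomial

/-! The bar involution is multiplicative on elements whose entries have degree at most the rank,
so `(g κ f)‾ = ḡ κ̄ f̄ = (g κ) κ̄ (κ f) = g κ (κ̄ κ) f = g κ f`. -/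

/-- The bar involution on the incidence algebra of `P` over `ℤ[t]` relative to a weak rank
function `r`: it sends `f` to the function `x y ↦ t^(r x y) · (f x y)(t⁻¹)`, i.e. the
reflection of `f x y` at degree `r x y`. -/
noncomputable def IncidenceAlgebra.bar {P : Type*} [PartialOrder P] [LocallyFiniteOrder P]
    (r : P → P → ℕ) (f : IncidenceAlgebra (Polynomial ℤ) P) :
    IncidenceAlgebra (Polynomial ℤ) P :=
  ⟨fun x y => (f x y).reflect (r x y), fun x y h => by
    try simp only []
    rw [IncidenceAlgebra.apply_eq_zero_of_not_le h, Polynomial.reflect_zero]⟩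

theorem Polynomial.reflect_sum {R ι : Type*} [Semiring R] (s : Finset ι) (p : ι → R[X])
    (N : ℕ) : reflect N (∑ i ∈ s, p i) = ∑ i ∈ s, reflect N (p i) :=
  map_sum (⟨⟨reflect N, reflect_zero⟩, fun p q => reflect_add p q N⟩ : R[X] →+ R[X]) p s

namespace IncidenceAlgebra

@[simp]
theorem bar_apply {P : Type*} [PartialOrder P] [LocallyFiniteOrder P] (r : P → P → ℕ)
    (f : IncidenceAlgebra ℤ[X] P) (x y : P) : bar r f x y = (f x y).reflect (r x y) := rfl

/-- Only under this bound does `reflect (r x y) (a x y)` equal `t ^ r x y · (a x y)(t⁻¹)`. -/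
def DegreeLE {P R : Type*} [LE P] [Semiring R] (r : P → P → ℕ) (a : IncidenceAlgebra R[X] P) :
    Prop :=
  ∀ x y, x ≤ y → (a x y).natDegree ≤ r x y

theorem degreeLE_of_half {P R : Type*} [PartialOrder P] [Semiring R] {r : P → P → ℕ}
    {a : IncidenceAlgebra R[X] P} (h_diag : ∀ x, a x x = 1)
    (h_half : ∀ x y, x < y → a x y = 0 ∨ 2 * (a x y).natDegree < r x y) : DegreeLE r a := by
  intro x y hxy
  rcases hxy.eq_or_lt with rfl | hlt
  · simp [h_diag]
  · rcases h_half x y hlt with h0 | h2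
    · simp [h0]
    · omega

theorem DegreeLE.mul {P R : Type*} [Preorder P] [LocallyFiniteOrder P] [Semiring R]
    {r : P → P → ℕ} (hr_add : ∀ x y z, x ≤ y → y ≤ z → r x y + r y z = r x z)
    {a b : IncidenceAlgebra R[X] P} (ha : DegreeLE r a) (hb : DegreeLE r b) :
    DegreeLE r (a * b) := by
  intro x y _
  rw [mul_apply]
  refine natDegree_sum_le_of_forall_le _ _ fun z hz => ?_
  obtain ⟨hxz, hzy⟩ := Finset.mem_Icc.mp hz
  calc (a x z * b z y).natDegree ≤ (a x z).natDegree + (b z y).natDegree := natDegree_mul_le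
    _ ≤ r x z + r z y := add_le_add (ha _ _ hxz) (hb _ _ hzy)
    _ = r x y := hr_add _ _ _ hxz hzy

theorem bar_mul {P : Type*} [PartialOrder P] [LocallyFiniteOrder P] {r : P → P → ℕ}
    (hr_add : ∀ x y z, x ≤ y → y ≤ z → r x y + r y z = r x z)
    {a b : IncidenceAlgebra ℤ[X] P} (ha : DegreeLE r a) (hb : DegreeLE r b) :
    bar r (a * b) = bar r a * bar r b := by
  ext x y : 1
  simp only [bar_apply, mul_apply, reflect_sum]
  refine Finset.sum_congr rfl fun z hz => ?_
  obtain ⟨hxz, hzy⟩ := Finset.mem_Icc.mp hz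
  rw [← hr_add x z y hxz hzy, reflect_mul _ _ (ha _ _ hxz) (hb _ _ hzy)]

end IncidenceAlgebra

theorem Z_function_palindromic_general {P : Type*} [PartialOrder P]
    [LocallyFiniteOrder P] [DecidableEq P] (r : P → P → ℕ)
    (hr_add : ∀ x y z : P, x ≤ y → y ≤ z → r x y + r y z = r x z)
    (κ : IncidenceAlgebra (Polynomial ℤ) P)
    (hκ_deg : ∀ x y : P, x ≤ y → (κ x y).natDegree ≤ r x y)
    (hκ_kernel : IncidenceAlgebra.bar r κ * κ = 1)
    (f g : IncidenceAlgebra (Polynomial ℤ) P)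
    (hf_diag : ∀ x : P, f x x = 1)
    (hf_half : ∀ x y : P, x < y → f x y = 0 ∨ 2 * (f x y).natDegree < r x y)
    (hf_bar : IncidenceAlgebra.bar r f = κ * f)
    (hg_diag : ∀ x : P, g x x = 1)
    (hg_half : ∀ x y : P, x < y → g x y = 0 ∨ 2 * (g x y).natDegree < r x y)
    (hg_bar : IncidenceAlgebra.bar r g = g * κ) :
    (∀ x y : P, x ≤ y → ((g * κ * f) x y).natDegree ≤ r x y) ∧
      ∀ x y : P, x ≤ y →
        ((g * κ * f) x y).reflect (r x y) = (g * κ * f) x y := by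
  have hf_deg : IncidenceAlgebra.DegreeLE r f :=
    IncidenceAlgebra.degreeLE_of_half hf_diag hf_half
  have hg_deg : IncidenceAlgebra.DegreeLE r g :=
    IncidenceAlgebra.degreeLE_of_half hg_diag hg_half
  have hgκ_deg : IncidenceAlgebra.DegreeLE r (g * κ) := hg_deg.mul hr_add hκ_deg
  have hZ_bar : IncidenceAlgebra.bar r (g * κ * f) = g * κ * f := calc
    IncidenceAlgebra.bar r (g * κ * f) = g * κ * IncidenceAlgebra.bar r κ * (κ * f) := by
      rw [IncidenceAlgebra.bar_mul hr_add hgκ_deg hf_deg,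
        IncidenceAlgebra.bar_mul hr_add hg_deg hκ_deg, hf_bar, hg_bar]
    _ = g * (κ * (IncidenceAlgebra.bar r κ * κ)) * f := by simp only [mul_assoc]
    _ = g * κ * f := by rw [hκ_kernel, mul_one]
  refine ⟨hgκ_deg.mul hr_add hf_deg, fun x y _ => ?_⟩
  rw [← IncidenceAlgebra.bar_apply r, hZ_bar]

/-- Let `κ` be a `P`-kernel with right KLS-function `f` and left KLS-function `g`
(elements of `𝓘_{1/2}(P)` satisfying `f̄ = κ * f` and `ḡ = g * κ`).  Then the
`Z`-function `Z := g * κ * f` satisfies `deg (Z x y) ≤ r x y` for all `x ≤ y` and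
`Z̄ = Z`: each `Z`-polynomial is palindromic with respect to degree `r x y`. -/
theorem Z_function_palindromic {P : Type*} [PartialOrder P]
    [LocallyFiniteOrder P] [DecidableEq P] (r : P → P → ℕ)
    (hr_pos : ∀ x y : P, x < y → 0 < r x y)
    (hr_add : ∀ x y z : P, x ≤ y → y ≤ z → r x y + r y z = r x z)
    (κ : IncidenceAlgebra (Polynomial ℤ) P)
    (hκ_deg : ∀ x y : P, x ≤ y → (κ x y).natDegree ≤ r x y)
    (hκ_diag : ∀ x : P, κ x x = 1)
    (hκ_kernel : IncidenceAlgebra.bar r κ * κ = 1)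
    (f g : IncidenceAlgebra (Polynomial ℤ) P)
    (hf_diag : ∀ x : P, f x x = 1)
    (hf_half : ∀ x y : P, x < y → f x y = 0 ∨ 2 * (f x y).natDegree < r x y)
    (hf_bar : IncidenceAlgebra.bar r f = κ * f)
    (hg_diag : ∀ x : P, g x x = 1)
    (hg_half : ∀ x y : P, x < y → g x y = 0 ∨ 2 * (g x y).natDegree < r x y)
    (hg_bar : IncidenceAlgebra.bar r g = g * κ) :
    (∀ x y : P, x ≤ y → ((g * κ * f) x y).natDegree ≤ r x y) ∧
      ∀ x y : P, x ≤ y →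
        ((g * κ * f) x y).reflect (r x y) = (g * κ * f) x y :=
  Z_function_palindromic_general r hr_add κ hκ_deg hκ_kernel f g hf_diag hf_half hf_bar hg_diag
    hg_half hg_bar
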